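/- There are exactly 3 isomorphism classes of 4-dimensional nilpotent Lie algebras over any field k with char(k) ≠ 2: the abelian algebra A₄, L₃ ⊕ A₁ (Heisenberg plus abelian), and the filiform algebra L₄ with brackets [X₄,X₃] = X₂ (in dual form dx₃ = x₁x₂, dx₄ = x₁x₃). -/

import Mathlib

/-- `br` is a Lie bracket on `kⁿ`: bilinear, alternating, and satisfying the Jacobi
identity (in Leibniz form). -/
def IsLieBracket (k : Type*) [Field k] {n : ℕ}
    (br : (Fin n → k) → (Fin n → k) → (Fin n → k)) : Prop :=
  (∀ x y z, br (x + y) z = br x z + br y z) ∧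
  (∀ (c : k) (x y), br (c • x) y = c • br x y) ∧
  (∀ x y z, br x (y + z) = br x y + br x z) ∧
  (∀ (c : k) (x y), br x (c • y) = c • br x y) ∧
  (∀ x, br x x = 0) ∧
  (∀ x y z, br x (br y z) = br (br x y) z + br y (br x z))

/-- The lower central series of a bracket on `kⁿ`. -/
noncomputable def lcs {k : Type*} [Field k] {n : ℕ}
    (br : (Fin n → k) → (Fin n → k) → (Fin n → k)) : ℕ → Submodule k (Fin n → k)
  | 0 => ⊤
  | m + 1 => Submodule.span k {w | ∃ x y, y ∈ lcs br m ∧ w = br x y}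

/-- A bracket is nilpotent if its lower central series reaches `0`. -/
def IsNilpotentBracket {k : Type*} [Field k] {n : ℕ}
    (br : (Fin n → k) → (Fin n → k) → (Fin n → k)) : Prop :=
  ∃ m, lcs br m = ⊥

/-- Two brackets on `kⁿ` are isomorphic if some linear automorphism of `kⁿ`
intertwines them. -/
def BracketIso {k : Type*} [Field k] {n : ℕ}
    (br br' : (Fin n → k) → (Fin n → k) → (Fin n → k)) : Prop :=
  ∃ e : (Fin n → k) ≃ₗ[k] (Fin n → k), ∀ x y, e (br x y) = br' (e x) (e y)

/-- The abelian bracket `A₄` on `k⁴`. -/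
def abelianBr4 (k : Type*) [Field k] :
    (Fin 4 → k) → (Fin 4 → k) → (Fin 4 → k) := fun _ _ => 0

/-- The bracket of `L₃ ⊕ A₁` (Heisenberg plus abelian) on `k⁴`: `[e₁, e₂] = e₃`. -/
noncomputable def heisSumBr (k : Type*) [Field k] :
    (Fin 4 → k) → (Fin 4 → k) → (Fin 4 → k) :=
  fun x y => (x 0 * y 1 - x 1 * y 0) • (Pi.single 2 1 : Fin 4 → k)

/-- The filiform bracket `L₄` on `k⁴`: `[e₁, e₂] = e₃`, `[e₁, e₃] = e₄`
(dual form `dx₃ = x₁x₂`, `dx₄ = x₁x₃`). -/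
noncomputable def filiformBr4 (k : Type*) [Field k] :
    (Fin 4 → k) → (Fin 4 → k) → (Fin 4 → k) :=
  fun x y => (x 0 * y 1 - x 1 * y 0) • (Pi.single 2 1 : Fin 4 → k) +
    (x 0 * y 2 - x 2 * y 0) • (Pi.single 3 1 : Fin 4 → k)

namespace Nilp4
open Submodule Module

section
variable {k : Type} [Field k]

section general
variable {n : ℕ} {br : (Fin n → k) → (Fin n → k) → (Fin n → k)}

noncomputable def brBil (h : IsLieBracket k br) :
    (Fin n → k) →ₗ[k] (Fin n → k) →ₗ[k] (Fin n → k) :=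
  LinearMap.mk₂ k br h.1 h.2.1 h.2.2.1 h.2.2.2.1

@[simp] lemma brBil_apply (h : IsLieBracket k br) (x y) : brBil h x y = br x y := rfl

lemma br_self (h : IsLieBracket k br) (x) : br x x = 0 := h.2.2.2.2.1 x

lemma br_add_antisymm (h : IsLieBracket k br) (x y) : br x y + br y x = 0 := by
  have e := h.2.2.2.2.1 (x + y)
  rw [h.1, h.2.2.1, h.2.2.1, h.2.2.2.2.1, h.2.2.2.2.1, zero_add, add_zero] at e
  exact e

lemma br_antisymm (h : IsLieBracket k br) (x y) : br y x = - br x y :=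
  eq_neg_of_add_eq_zero_right (br_add_antisymm h x y)

lemma lcs_succ (br : (Fin n → k) → (Fin n → k) → (Fin n → k)) (m : ℕ) :
    lcs br (m + 1) = Submodule.span k {w | ∃ x y, y ∈ lcs br m ∧ w = br x y} := rfl

lemma lcs_succ_le (br : (Fin n → k) → (Fin n → k) → (Fin n → k)) :
    ∀ m, lcs br (m + 1) ≤ lcs br m
  | 0 => le_top
  | (m + 1) => by
      rw [lcs_succ br (m + 1), lcs_succ br m]
      exact span_mono (fun w ⟨x, y, hy, hw⟩ => ⟨x, y, lcs_succ_le br m hy, hw⟩)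

lemma lcs_antitone (br : (Fin n → k) → (Fin n → k) → (Fin n → k)) :
    Antitone (lcs br) :=
  antitone_nat_of_succ_le (lcs_succ_le br)

lemma br_mem_lcs {m : ℕ} {y : Fin n → k} (hy : y ∈ lcs br m) (x : Fin n → k) :
    br x y ∈ lcs br (m + 1) :=
  subset_span ⟨x, y, hy, rfl⟩

lemma br_mem_lcs_one (x y : Fin n → k) : br x y ∈ lcs br 1 :=
  br_mem_lcs mem_top x

lemma lcs_stab {m : ℕ} (hm : lcs br (m + 1) = lcs br m) :
    ∀ p, lcs br (m + p) = lcs br m := by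
  intro p
  induction p with
  | zero => rfl
  | succ p ih =>
      have : lcs br (m + (p + 1)) = lcs br (m + 1) := by
        show lcs br ((m + p) + 1) = _
        rw [lcs_succ br (m + p), ih, ← lcs_succ br m]
      rw [this, hm]

lemma lcs_strict (hn : IsNilpotentBracket br) {m : ℕ} (hm : lcs br m ≠ ⊥) :
    lcs br (m + 1) < lcs br m := by
  refine lt_of_le_of_ne (lcs_succ_le br m) ?_
  intro he
  obtain ⟨N, hN⟩ := hn
  rcases le_total N m with h1 | h1
  · exact hm (le_bot_iff.1 (hN ▸ lcs_antitone br h1))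
  · have := lcs_stab he (N - m)
    rw [Nat.add_sub_cancel' h1] at this
    exact hm (this ▸ hN)

lemma eq_sum_single (x : Fin n → k) : x = ∑ i, x i • (Pi.single i 1 : Fin n → k) := by
  funext j; simp [Finset.sum_apply, Pi.single_apply]

lemma br_eq_sum (h : IsLieBracket k br) (x y : Fin n → k) :
    br x y = ∑ i, ∑ j, (x i * y j) • br (Pi.single i 1) (Pi.single j 1) := by
  conv_lhs => rw [eq_sum_single x, eq_sum_single y,
    show br (∑ i, x i • (Pi.single i 1 : Fin n → k)) (∑ j, y j • (Pi.single j 1 : Fin n → k))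
      = brBil h (∑ i, x i • (Pi.single i 1 : Fin n → k)) (∑ j, y j • (Pi.single j 1 : Fin n → k)) from rfl]
  simp only [map_sum, LinearMap.sum_apply, map_smul, LinearMap.smul_apply, brBil_apply,
    Finset.smul_sum, smul_smul]
  rw [Finset.sum_comm]
  refine Finset.sum_congr rfl fun i _ => Finset.sum_congr rfl fun j _ => ?_
  rw [mul_comm]

end general


end
section
variable {k : Type} [Field k]

section general
variable {n : ℕ}

lemma brIso_symm {br br' : (Fin n → k) → (Fin n → k) → (Fin n → k)} :
    BracketIso br br' → BracketIso br' br := by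
  rintro ⟨e, he⟩
  refine ⟨e.symm, fun x y => ?_⟩
  apply e.injective
  simp [he]

lemma bracketIso_of_basis {br br' : (Fin n → k) → (Fin n → k) → (Fin n → k)}
    (h : IsLieBracket k br) (h' : IsLieBracket k br')
    (v : Basis (Fin n) k (Fin n → k))
    (hv : ∀ i j, (Pi.basisFun k (Fin n)).equiv v (Equiv.refl _)
        (br (Pi.single i 1) (Pi.single j 1)) = br' (v i) (v j)) :
    BracketIso br br' := by
  set E := (Pi.basisFun k (Fin n)).equiv v (Equiv.refl _) with hEdef
  have hE : ∀ i, E (Pi.single i 1) = v i := by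
    intro i
    have := (Pi.basisFun k (Fin n)).equiv_apply (i := i) (b' := v) (e := Equiv.refl _)
    simpa using this
  have hx : ∀ x : Fin n → k, E x = ∑ i, x i • v i := by
    intro x
    conv_lhs => rw [eq_sum_single x]
    simp [map_sum, map_smul, hE]
  refine ⟨E, fun x y => ?_⟩
  calc E (br x y) = ∑ i, ∑ j, (x i * y j) • br' (v i) (v j) := by
        rw [br_eq_sum h]
        simp [map_sum, map_smul, hv]
      _ = br' (E x) (E y) := by
        rw [hx x, hx y]
        show _ = brBil h' _ _
        simp only [map_sum, LinearMap.sum_apply, map_smul, LinearMap.smul_apply, brBil_apply,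
          Finset.smul_sum, smul_smul]
        rw [Finset.sum_comm]
        refine Finset.sum_congr rfl fun i _ => Finset.sum_congr rfl fun j _ => ?_
        rw [mul_comm]

end general

/-- independence from a filiform-type multiplication table -/
lemma li_of_filiform_table {br : (Fin 4 → k) → (Fin 4 → k) → (Fin 4 → k)}
    (h : IsLieBracket k br) (b : Fin 4 → (Fin 4 → k))
    (h01 : br (b 0) (b 1) = b 2) (h02 : br (b 0) (b 2) = b 3)
    (h03 : br (b 0) (b 3) = 0) (h12 : br (b 1) (b 2) = 0) (h13 : br (b 1) (b 3) = 0)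
    (hb4 : b 3 ≠ 0) (hb34 : b 2 ∉ span k {b 3}) :
    LinearIndependent k b := by
  have hb3 : b 2 ≠ 0 := fun hb => hb34 (hb ▸ zero_mem _)
  rw [Fintype.linearIndependent_iff]
  intro g hg
  rw [Fin.sum_univ_four] at hg
  -- bracket the relation with b 1 on the right
  have e1 : br (g 0 • b 0 + g 1 • b 1 + g 2 • b 2 + g 3 • b 3) (b 1)
      = g 0 • br (b 0) (b 1) + g 1 • br (b 1) (b 1) + g 2 • br (b 2) (b 1)
        + g 3 • br (b 3) (b 1) := by
    show brBil h _ (b 1) = _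
    simp [map_add, map_smul]
  rw [hg] at e1
  have hz : br (0 : Fin 4 → k) (b 1) = 0 := by
    have := h.2.1 0 0 (b 1); simpa using this
  rw [hz, h01, br_self h, br_antisymm h (b 1) (b 2), h12,
    br_antisymm h (b 1) (b 3), h13] at e1
  simp only [smul_zero, neg_zero, add_zero] at e1
  have hg0 : g 0 = 0 := by
    by_contra hne
    exact hb3 (by
      have := congrArg (fun z => (g 0)⁻¹ • z) e1.symm
      simpa [smul_smul, inv_mul_cancel₀ hne] using this)
  -- bracket the relation with b 0 on the right
  have e2 : br (g 0 • b 0 + g 1 • b 1 + g 2 • b 2 + g 3 • b 3) (b 0)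
      = g 0 • br (b 0) (b 0) + g 1 • br (b 1) (b 0) + g 2 • br (b 2) (b 0)
        + g 3 • br (b 3) (b 0) := by
    show brBil h _ (b 0) = _
    simp [map_add, map_smul]
  rw [hg] at e2
  have hz0 : br (0 : Fin 4 → k) (b 0) = 0 := by
    have := h.2.1 0 0 (b 0); simpa using this
  rw [hz0, br_self h, br_antisymm h (b 0) (b 1), h01, br_antisymm h (b 0) (b 2), h02,
    br_antisymm h (b 0) (b 3)] at e2
  rw [h03] at e2
  simp only [smul_zero, neg_zero, add_zero, smul_neg, zero_add] at e2
  -- e2 : 0 = -(g 1 • b 2) + -(g 2 • b 3)  (roughly)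
  have e2' : g 1 • b 2 + g 2 • b 3 = 0 := by linear_combination (norm := module) e2
  have hg1 : g 1 = 0 := by
    by_contra hne
    refine hb34 ?_
    have : b 2 = (g 1)⁻¹ • (-(g 2) • b 3) := by
      have := congrArg (fun z => (g 1)⁻¹ • z) e2'
      simp only [smul_add, smul_smul, inv_mul_cancel₀ hne, one_smul, smul_zero] at this
      linear_combination (norm := module) this
    rw [this]
    exact smul_mem _ _ (smul_mem _ _ (mem_span_singleton_self _))
  rw [hg1, zero_smul, zero_add] at e2'
  have hg2 : g 2 = 0 := by
    rcases smul_eq_zero.1 e2' with h' | h'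
    · exact h'
    · exact absurd h' hb4
  rw [hg0, hg1, hg2, zero_smul, zero_smul, zero_smul, zero_add, zero_add, zero_add] at hg
  have hg3 : g 3 = 0 := by
    rcases smul_eq_zero.1 hg with h' | h'
    · exact h'
    · exact absurd h' hb4
  intro i; fin_cases i <;> assumption



end
section
variable (k : Type) [Field k]

lemma isLie_abelian : IsLieBracket k (abelianBr4 k) := by
  refine ⟨?_, ?_, ?_, ?_, ?_, ?_⟩ <;> intros <;> simp [abelianBr4]

lemma isLie_heis : IsLieBracket k (heisSumBr k) := by
  refine ⟨?_, ?_, ?_, ?_, ?_, ?_⟩ <;> intros <;>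
    (funext j; fin_cases j <;> simp [heisSumBr, Pi.single_apply] <;> ring)

lemma isLie_fil : IsLieBracket k (filiformBr4 k) := by
  refine ⟨?_, ?_, ?_, ?_, ?_, ?_⟩ <;> intros <;>
    (funext j; fin_cases j <;> simp [filiformBr4, Pi.single_apply] <;> ring)

lemma isNilpotent_abelian : IsNilpotentBracket (abelianBr4 k) := by
  refine ⟨1, le_bot_iff.1 (span_le.2 ?_)⟩
  rintro w ⟨x, y, -, rfl⟩
  simp [abelianBr4]

lemma isNilpotent_heis : IsNilpotentBracket (heisSumBr k) := by
  have h1 : ∀ w ∈ lcs (heisSumBr k) 1, w 0 = 0 ∧ w 1 = 0 := by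
    have : lcs (heisSumBr k) 1 ≤
        LinearMap.ker (LinearMap.proj (R := k) (φ := fun _ : Fin 4 => k) 0) ⊓
        LinearMap.ker (LinearMap.proj 1) := by
      refine span_le.2 ?_
      rintro w ⟨x, y, -, rfl⟩
      refine mem_inf.2 ⟨?_, ?_⟩ <;> simp [heisSumBr, Pi.single_apply]
    intro w hw
    have := this hw
    rw [mem_inf] at this
    exact ⟨this.1, this.2⟩
  refine ⟨2, le_bot_iff.1 (span_le.2 ?_)⟩
  rintro w ⟨x, y, hy, rfl⟩
  obtain ⟨hy0, hy1⟩ := h1 y hy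
  simp [heisSumBr, hy0, hy1]

lemma isNilpotent_fil : IsNilpotentBracket (filiformBr4 k) := by
  have h1 : ∀ w ∈ lcs (filiformBr4 k) 1, w 0 = 0 ∧ w 1 = 0 := by
    have : lcs (filiformBr4 k) 1 ≤
        LinearMap.ker (LinearMap.proj (R := k) (φ := fun _ : Fin 4 => k) 0) ⊓
        LinearMap.ker (LinearMap.proj 1) := by
      refine span_le.2 ?_
      rintro w ⟨x, y, -, rfl⟩
      refine mem_inf.2 ⟨?_, ?_⟩ <;> simp [filiformBr4, Pi.single_apply]
    intro w hw
    have := this hw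
    rw [mem_inf] at this
    exact ⟨this.1, this.2⟩
  have h2 : ∀ w ∈ lcs (filiformBr4 k) 2, w 0 = 0 ∧ w 1 = 0 ∧ w 2 = 0 := by
    have : lcs (filiformBr4 k) 2 ≤
        LinearMap.ker (LinearMap.proj (R := k) (φ := fun _ : Fin 4 => k) 0) ⊓
        (LinearMap.ker (LinearMap.proj 1) ⊓ LinearMap.ker (LinearMap.proj 2)) := by
      refine span_le.2 ?_
      rintro w ⟨x, y, hy, rfl⟩
      obtain ⟨hy0, hy1⟩ := h1 y hy
      refine mem_inf.2 ⟨?_, mem_inf.2 ⟨?_, ?_⟩⟩ <;>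
        simp [filiformBr4, Pi.single_apply, hy0, hy1]
    intro w hw
    have := this hw
    rw [mem_inf, mem_inf] at this
    exact ⟨this.1, this.2.1, this.2.2⟩
  refine ⟨3, le_bot_iff.1 (span_le.2 ?_)⟩
  rintro w ⟨x, y, hy, rfl⟩
  obtain ⟨hy0, hy1, hy2⟩ := h2 y hy
  simp [filiformBr4, hy0, hy1, hy2]



end
section
variable {k : Type} [Field k] {br : (Fin 4 → k) → (Fin 4 → k) → (Fin 4 → k)}

lemma card_eq_finrank : Fintype.card (Fin 4) = finrank k (Fin 4 → k) := by
  simp [Module.finrank_fin_fun]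

lemma iso_heis_of_table (h : IsLieBracket k br) (b : Fin 4 → (Fin 4 → k))
    (li : LinearIndependent k b)
    (h01 : br (b 0) (b 1) = b 2) (h02 : br (b 0) (b 2) = 0) (h03 : br (b 0) (b 3) = 0)
    (h12 : br (b 1) (b 2) = 0) (h13 : br (b 1) (b 3) = 0) (h23 : br (b 2) (b 3) = 0) :
    BracketIso br (heisSumBr k) := by
  apply brIso_symm
  set v := basisOfLinearIndependentOfCardEqFinrank li card_eq_finrank with hv
  have hvb : ∀ i, v i = b i := fun i => by
    rw [hv, coe_basisOfLinearIndependentOfCardEqFinrank]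
  refine bracketIso_of_basis (isLie_heis k) h v ?_
  set E := (Pi.basisFun k (Fin 4)).equiv v (Equiv.refl _) with hEdef
  have hE : ∀ i, E (Pi.single i 1) = b i := fun i => by
    rw [hEdef]
    simpa [hvb] using
      (Pi.basisFun k (Fin 4)).equiv_apply (i := i) (b' := v) (e := Equiv.refl _)
  have h10 : br (b 1) (b 0) = -(b 2) := by rw [br_antisymm h (b 0) (b 1), h01]
  have h20 : br (b 2) (b 0) = 0 := by rw [br_antisymm h (b 0) (b 2), h02, neg_zero]
  have h30 : br (b 3) (b 0) = 0 := by rw [br_antisymm h (b 0) (b 3), h03, neg_zero]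
  have h21 : br (b 2) (b 1) = 0 := by rw [br_antisymm h (b 1) (b 2), h12, neg_zero]
  have h31 : br (b 3) (b 1) = 0 := by rw [br_antisymm h (b 1) (b 3), h13, neg_zero]
  have h32 : br (b 3) (b 2) = 0 := by rw [br_antisymm h (b 2) (b 3), h23, neg_zero]
  intro i j
  fin_cases i <;> fin_cases j <;>
    simp [heisSumBr, Pi.single_apply, hvb, hE, h01, h02, h03, h12, h13, h23,
      h10, h20, h30, h21, h31, h32, br_self h]

lemma iso_fil_of_table (h : IsLieBracket k br) (b : Fin 4 → (Fin 4 → k))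
    (h01 : br (b 0) (b 1) = b 2) (h02 : br (b 0) (b 2) = b 3) (h03 : br (b 0) (b 3) = 0)
    (h12 : br (b 1) (b 2) = 0) (h13 : br (b 1) (b 3) = 0) (h23 : br (b 2) (b 3) = 0)
    (hb4 : b 3 ≠ 0) (hb34 : b 2 ∉ span k {b 3}) :
    BracketIso br (filiformBr4 k) := by
  have li := li_of_filiform_table h b h01 h02 h03 h12 h13 hb4 hb34
  apply brIso_symm
  set v := basisOfLinearIndependentOfCardEqFinrank li card_eq_finrank with hv
  have hvb : ∀ i, v i = b i := fun i => by
    rw [hv, coe_basisOfLinearIndependentOfCardEqFinrank]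
  refine bracketIso_of_basis (isLie_fil k) h v ?_
  set E := (Pi.basisFun k (Fin 4)).equiv v (Equiv.refl _) with hEdef
  have hE : ∀ i, E (Pi.single i 1) = b i := fun i => by
    rw [hEdef]
    simpa [hvb] using
      (Pi.basisFun k (Fin 4)).equiv_apply (i := i) (b' := v) (e := Equiv.refl _)
  have h10 : br (b 1) (b 0) = -(b 2) := by rw [br_antisymm h (b 0) (b 1), h01]
  have h20 : br (b 2) (b 0) = -(b 3) := by rw [br_antisymm h (b 0) (b 2), h02]
  have h30 : br (b 3) (b 0) = 0 := by rw [br_antisymm h (b 0) (b 3), h03, neg_zero]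
  have h21 : br (b 2) (b 1) = 0 := by rw [br_antisymm h (b 1) (b 2), h12, neg_zero]
  have h31 : br (b 3) (b 1) = 0 := by rw [br_antisymm h (b 1) (b 3), h13, neg_zero]
  have h32 : br (b 3) (b 2) = 0 := by rw [br_antisymm h (b 2) (b 3), h23, neg_zero]
  intro i j
  fin_cases i <;> fin_cases j <;>
    simp [filiformBr4, Pi.single_apply, hvb, hE, h01, h02, h03, h12, h13, h23,
      h10, h20, h30, h21, h31, h32, br_self h]

lemma not_iso_abelian_heis : ¬ BracketIso (abelianBr4 k) (heisSumBr k) := by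
  rintro ⟨e, he⟩
  have h0 : ∀ x y : Fin 4 → k, heisSumBr k x y = 0 := by
    intro x y
    have := he (e.symm x) (e.symm y)
    simpa [abelianBr4] using this.symm
  have := congrFun (h0 (Pi.single 0 1) (Pi.single 1 1)) 2
  simp [heisSumBr, Pi.single_apply] at this

lemma not_iso_abelian_fil : ¬ BracketIso (abelianBr4 k) (filiformBr4 k) := by
  rintro ⟨e, he⟩
  have h0 : ∀ x y : Fin 4 → k, filiformBr4 k x y = 0 := by
    intro x y
    have := he (e.symm x) (e.symm y)
    simpa [abelianBr4] using this.symm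
  have := congrFun (h0 (Pi.single 0 1) (Pi.single 1 1)) 2
  simp [filiformBr4, Pi.single_apply] at this

lemma not_iso_heis_fil : ¬ BracketIso (heisSumBr k) (filiformBr4 k) := by
  rintro ⟨e, he⟩
  have h1 : ∀ a b c : Fin 4 → k, heisSumBr k a (heisSumBr k b c) = 0 := by
    intro a b c
    have h2 : ∀ j : Fin 4, (j = 0 ∨ j = 1) → heisSumBr k b c j = 0 := by
      rintro j (rfl | rfl) <;> simp [heisSumBr, Pi.single_apply]
    simp [heisSumBr, h2 0 (Or.inl rfl), h2 1 (Or.inr rfl)]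
  have key : ∀ x y z : Fin 4 → k,
      filiformBr4 k x (filiformBr4 k y z) = 0 := by
    intro x y z
    have e1 := he (e.symm x) (heisSumBr k (e.symm y) (e.symm z))
    have e2 := he (e.symm y) (e.symm z)
    rw [h1] at e1
    rw [e2] at e1
    simpa using e1.symm
  have := congrFun
    (key (Pi.single 0 1) (Pi.single 0 1) (Pi.single 1 1)) 3
  simp [filiformBr4, Pi.single_apply] at this



end
section
variable {k : Type} [Field k] {br : (Fin 4 → k) → (Fin 4 → k) → (Fin 4 → k)}

lemma br_zero_left (h : IsLieBracket k br) (y : Fin 4 → k) : br 0 y = 0 := by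
  have := h.2.1 0 0 y; simpa using this

lemma br_zero_right (h : IsLieBracket k br) (x : Fin 4 → k) : br x 0 = 0 := by
  have := h.2.2.2.1 0 x 0; simpa using this

lemma br_expand_basis (h : IsLieBracket k br) (v : Basis (Fin 4) k (Fin 4 → k))
    (x y : Fin 4 → k) :
    br x y = ∑ i, (v.repr x i) • brBil h (v i) y := by
  conv_lhs => rw [show br x y = brBil h x y from rfl, ← Module.Basis.sum_repr v x]
  simp only [map_sum, LinearMap.sum_apply, map_smul, LinearMap.smul_apply, brBil_apply]

lemma br_expand_basis_right (h : IsLieBracket k br) (v : Basis (Fin 4) k (Fin 4 → k))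
    (x y : Fin 4 → k) :
    brBil h x y = ∑ j, (v.repr y j) • br x (v j) := by
  conv_lhs => rw [← Module.Basis.sum_repr v y]
  simp only [map_sum, map_smul, brBil_apply]

lemma br_left_eq_zero (h : IsLieBracket k br) (b : Fin 4 → (Fin 4 → k))
    (li : LinearIndependent k b) (y : Fin 4 → k) (hb : ∀ i, br (b i) y = 0)
    (x : Fin 4 → k) : br x y = 0 := by
  set v := basisOfLinearIndependentOfCardEqFinrank li card_eq_finrank with hv
  have hvb : ∀ i, v i = b i := fun i => by
    rw [hv, coe_basisOfLinearIndependentOfCardEqFinrank]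
  rw [br_expand_basis h v x y]
  refine Finset.sum_eq_zero fun i _ => ?_
  rw [show brBil h (v i) y = br (v i) y from rfl, hvb, hb i, smul_zero]

lemma br_all_mem_span (h : IsLieBracket k br) (b : Fin 4 → (Fin 4 → k))
    (li : LinearIndependent k b) (S : Submodule k (Fin 4 → k))
    (hS : ∀ i j, br (b i) (b j) ∈ S) (x y : Fin 4 → k) : br x y ∈ S := by
  set v := basisOfLinearIndependentOfCardEqFinrank li card_eq_finrank with hv
  have hvb : ∀ i, v i = b i := fun i => by
    rw [hv, coe_basisOfLinearIndependentOfCardEqFinrank]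
  rw [br_expand_basis h v x y]
  refine sum_mem fun i _ => smul_mem _ _ ?_
  rw [br_expand_basis_right h v (v i) y]
  refine sum_mem fun j _ => smul_mem _ _ ?_
  rw [hvb, hvb]
  exact hS i j

lemma fr_span_singleton_le (x : Fin 4 → k) : finrank k (span k ({x} : Set (Fin 4 → k))) ≤ 1 := by
  by_cases hx : x = 0
  · rw [hx, span_zero_singleton, finrank_bot]; omega
  · rw [finrank_span_singleton hx]

lemma fr_sup_le (A B : Submodule k (Fin 4 → k)) :
    finrank k ↥(A ⊔ B) ≤ finrank k A + finrank k B := by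
  have := Submodule.finrank_sup_add_finrank_inf_eq A B
  omega



end
section
variable {k : Type} [Field k] {br : (Fin 4 → k) → (Fin 4 → k) → (Fin 4 → k)}

/-- The dimension-1-derived-algebra case: Heisenberg ⊕ abelian. -/
lemma classify_dim1 (h : IsLieBracket k br) (hn : IsNilpotentBracket br)
    (habel : lcs br 1 ≠ ⊥) (hlt2 : lcs br 2 < lcs br 1)
    (hd1 : finrank k (lcs br 1) = 1) :
    BracketIso br (heisSumBr k) := by
  have hfr : finrank k (Fin 4 → k) = 4 := Module.finrank_fin_fun k
  obtain ⟨c, hcD, hc0⟩ := Submodule.exists_mem_ne_zero_of_ne_bot habel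
  have hspan : lcs br 1 = span k {c} := by
    symm
    apply Submodule.eq_of_le_of_finrank_eq ((span_singleton_le_iff_mem c _).2 hcD)
    rw [finrank_span_singleton hc0, hd1]
  obtain ⟨i0, hi0⟩ : ∃ i, c i ≠ 0 := by
    by_contra hc; push_neg at hc; exact hc0 (funext fun i => hc i)
  set φ : (Fin 4 → k) → (Fin 4 → k) → k := fun x y => br x y i0 * (c i0)⁻¹ with hφ
  have hbrc : ∀ x y, br x y = φ x y • c := by
    intro x y
    have hm : br x y ∈ span k {c} := hspan ▸ br_mem_lcs_one x y
    obtain ⟨t, ht⟩ := mem_span_singleton.1 hm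
    have ht' : φ x y = t := by
      show br x y i0 * (c i0)⁻¹ = t
      rw [← ht]
      simp only [Pi.smul_apply, smul_eq_mul]
      rw [mul_assoc, mul_inv_cancel₀ hi0, mul_one]
    rw [ht', ht]
  have hφs1 : ∀ (t : k) x y, φ (t • x) y = t * φ x y := by
    intro t x y
    show br (t • x) y i0 * (c i0)⁻¹ = t * (br x y i0 * (c i0)⁻¹)
    rw [h.2.1]
    simp [mul_assoc]
  have hφs2 : ∀ (t : k) x y, φ x (t • y) = t * φ x y := by
    intro t x y
    show br x (t • y) i0 * (c i0)⁻¹ = t * (br x y i0 * (c i0)⁻¹)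
    rw [h.2.2.2.1]
    simp [mul_assoc]
  have hφa1 : ∀ x y z, φ (x + y) z = φ x z + φ y z := by
    intro x y z
    show br (x + y) z i0 * (c i0)⁻¹ = br x z i0 * (c i0)⁻¹ + br y z i0 * (c i0)⁻¹
    rw [h.1]
    simp [add_mul]
  have hφa2 : ∀ x y z, φ x (y + z) = φ x y + φ x z := by
    intro x y z
    show br x (y + z) i0 * (c i0)⁻¹ = br x y i0 * (c i0)⁻¹ + br x z i0 * (c i0)⁻¹
    rw [h.2.2.1]
    simp [add_mul]
  have hφ0 : ∀ x, φ x x = 0 := by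
    intro x
    show br x x i0 * (c i0)⁻¹ = 0
    rw [br_self h]
    simp
  have hφanti : ∀ x y, φ y x = -φ x y := by
    intro x y
    show br y x i0 * (c i0)⁻¹ = -(br x y i0 * (c i0)⁻¹)
    rw [br_antisymm h x y]
    simp
  have hφc : ∀ x, φ x c = 0 := by
    intro x
    by_contra hne
    have hcm : c ∈ lcs br 2 := by
      have hch : (φ x c)⁻¹ • br x c = c := by
        rw [hbrc x c, smul_smul, inv_mul_cancel₀ hne, one_smul]
      rw [← hch]
      exact smul_mem _ _ (br_mem_lcs hcD x)
    have hle : lcs br 1 ≤ lcs br 2 := by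
      rw [hspan]
      exact (span_singleton_le_iff_mem _ _).2 hcm
    exact absurd hle hlt2.not_ge
  have hφc' : ∀ x, φ c x = 0 := fun x => by rw [hφanti, hφc, neg_zero]
  obtain ⟨u0, v, huv⟩ : ∃ u v, φ u v ≠ 0 := by
    by_contra hcon; push_neg at hcon
    apply habel
    apply le_bot_iff.1
    refine span_le.2 ?_
    rintro w ⟨x, y, -, rfl⟩
    rw [SetLike.mem_coe, mem_bot, hbrc x y, hcon x y, zero_smul]
  obtain ⟨u, hφuv⟩ : ∃ u, φ u v = 1 :=
    ⟨(φ u0 v)⁻¹ • u0, by rw [hφs1, inv_mul_cancel₀ huv]⟩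
  have hbruv : br u v = c := by rw [hbrc u v, hφuv, one_smul]
  -- find w0 outside span {u, v, c}
  have hS3 : finrank k (span k ({u, v, c} : Set (Fin 4 → k))) < 4 := by
    have e3 : span k ({u, v, c} : Set (Fin 4 → k))
        = span k {u} ⊔ (span k {v} ⊔ span k {c}) := by
      rw [Submodule.span_insert, Submodule.span_insert]
    rw [e3]
    have f1 := fr_span_singleton_le (k := k) u
    have f2 := fr_span_singleton_le (k := k) v
    have f3 := fr_span_singleton_le (k := k) c
    have s1 := fr_sup_le (span k ({v} : Set (Fin 4 → k))) (span k {c})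
    have s2 := fr_sup_le (span k ({u} : Set (Fin 4 → k))) (span k {v} ⊔ span k {c})
    omega
  have hne_top : span k ({u, v, c} : Set (Fin 4 → k)) ≠ ⊤ := by
    intro e; rw [e, finrank_top, hfr] at hS3; omega
  obtain ⟨w0, -, hw0⟩ := SetLike.exists_of_lt
    (show span k ({u, v, c} : Set (Fin 4 → k)) < ⊤ from Ne.lt_top hne_top)
  have humem : u ∈ span k ({u, v, c} : Set (Fin 4 → k)) := subset_span (by simp)
  have hvmem : v ∈ span k ({u, v, c} : Set (Fin 4 → k)) := subset_span (by simp)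
  have hcmem : c ∈ span k ({u, v, c} : Set (Fin 4 → k)) := subset_span (by simp)
  obtain ⟨w, hφuw, hφvw, hwnot⟩ :
      ∃ w, φ u w = 0 ∧ φ v w = 0 ∧ w ∉ span k ({u, v, c} : Set (Fin 4 → k)) := by
    refine ⟨w0 + (φ v w0) • u + (-(φ u w0)) • v, ?_, ?_, ?_⟩
    · rw [hφa2, hφa2, hφs2, hφs2, hφ0, hφuv]
      ring
    · rw [hφa2, hφa2, hφs2, hφs2, hφ0]
      have : φ v u = -1 := by rw [hφanti, hφuv]
      rw [this]
      ring
    · intro hwm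
      apply hw0
      have hrw : w0 = (w0 + (φ v w0) • u + (-(φ u w0)) • v)
          + (-(φ v w0)) • u + (φ u w0) • v := by
        module
      rw [hrw]
      exact add_mem (add_mem hwm (smul_mem _ _ humem)) (smul_mem _ _ hvmem)
  -- independence
  set b : Fin 4 → (Fin 4 → k) := ![u, v, c, w] with hb
  have hb0 : b 0 = u := rfl
  have hb1 : b 1 = v := rfl
  have hb2 : b 2 = c := rfl
  have hb3 : b 3 = w := rfl
  have li : LinearIndependent k b := by
    rw [Fintype.linearIndependent_iff]
    intro g hg
    rw [Fin.sum_univ_four, hb0, hb1, hb2, hb3] at hg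
    have hphi : ∀ z, φ (g 0 • u + g 1 • v + g 2 • c + g 3 • w) z
        = g 0 * φ u z + g 1 * φ v z + g 2 * φ c z + g 3 * φ w z := by
      intro z
      rw [hφa1, hφa1, hφa1, hφs1, hφs1, hφs1, hφs1]
    have hφ0z : ∀ z, φ (0 : Fin 4 → k) z = 0 := by
      intro z
      show br 0 z i0 * (c i0)⁻¹ = 0
      rw [br_zero_left h]
      simp
    have hφwv : φ w v = 0 := by rw [hφanti, hφvw, neg_zero]
    have hφwu : φ w u = 0 := by rw [hφanti, hφuw, neg_zero]
    have hg0 : g 0 = 0 := by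
      have e := hphi v
      rw [hg, hφ0z, hφuv, hφ0 v, hφc' v, hφwv] at e
      have := e.symm
      simpa using this
    have hg1 : g 1 = 0 := by
      have e := hphi u
      have hφvu : φ v u = -1 := by rw [hφanti, hφuv]
      rw [hg, hφ0z, hφ0 u, hφvu, hφc' u, hφwu] at e
      have := e.symm
      simpa using this
    rw [hg0, hg1, zero_smul, zero_smul, zero_add, zero_add] at hg
    have hg3 : g 3 = 0 := by
      by_contra hne
      apply hwnot
      have hrw : w = (g 3)⁻¹ • (-(g 2) • c) := by
        have e := congrArg (fun z => (g 3)⁻¹ • z) hg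
        simp only [smul_add, smul_smul, inv_mul_cancel₀ hne, one_smul, smul_zero] at e
        linear_combination (norm := module) e
      rw [hrw]
      exact smul_mem _ _ (smul_mem _ _ hcmem)
    rw [hg3, zero_smul, add_zero] at hg
    have hg2 : g 2 = 0 := by
      rcases smul_eq_zero.1 hg with h' | h'
      · exact h'
      · exact absurd h' hc0
    intro i; fin_cases i <;> assumption
  -- bracket table
  have h02 : br u c = 0 := by rw [hbrc, hφc, zero_smul]
  have h03 : br u w = 0 := by rw [hbrc, hφuw, zero_smul]
  have h12 : br v c = 0 := by rw [hbrc, hφc, zero_smul]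
  have h13 : br v w = 0 := by rw [hbrc, hφvw, zero_smul]
  have h23 : br c w = 0 := by rw [hbrc, hφc', zero_smul]
  exact iso_heis_of_table h b li hbruv h02 h03 h12 h13 h23



end
section
variable {k : Type} [Field k] {br : (Fin 4 → k) → (Fin 4 → k) → (Fin 4 → k)}

/-- The dimension-2-derived-algebra case: filiform. -/
lemma classify_dim2 (h : IsLieBracket k br) (hn : IsNilpotentBracket br)
    (habel : lcs br 1 ≠ ⊥) (hlt2 : lcs br 2 < lcs br 1)
    (hd2 : finrank k (lcs br 1) = 2) :
    BracketIso br (filiformBr4 k) := by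
  -- first: the second term of the lower central series is nonzero
  have hb2 : lcs br 2 ≠ ⊥ := by
    intro hbot
    have hcentral : ∀ x y, y ∈ lcs br 1 → br x y = 0 := by
      intro x y hy
      have := br_mem_lcs hy x
      rwa [hbot, mem_bot] at this
    obtain ⟨a, b, hab⟩ : ∃ a b, br a b ≠ 0 := by
      by_contra hcon; push_neg at hcon
      refine habel (le_bot_iff.1 (span_le.2 ?_))
      rintro w ⟨x, y, -, rfl⟩
      rw [SetLike.mem_coe, mem_bot]
      exact hcon x y
    have hpD : br a b ∈ lcs br 1 := br_mem_lcs_one a b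
    have hsp_lt : span k {br a b} < lcs br 1 := by
      refine lt_of_le_of_ne ((span_singleton_le_iff_mem _ _).2 hpD) ?_
      intro e
      rw [← e, finrank_span_singleton hab] at hd2
      omega
    obtain ⟨q, hqD, hqp⟩ := SetLike.exists_of_lt hsp_lt
    have hza : ∀ x, br x (br a b) = 0 := fun x => hcentral x _ hpD
    have hzq : ∀ x, br x q = 0 := fun x => hcentral x q hqD
    have hpa : br (br a b) a = 0 := by rw [br_antisymm h a (br a b), hza, neg_zero]
    have hpb : br (br a b) b = 0 := by rw [br_antisymm h b (br a b), hza, neg_zero]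
    have hqa : br q a = 0 := by rw [br_antisymm h a q, hzq, neg_zero]
    have hqb : br q b = 0 := by rw [br_antisymm h b q, hzq, neg_zero]
    have hba : br b a = -(br a b) := br_antisymm h a b
    set bb : Fin 4 → (Fin 4 → k) := ![a, b, br a b, q] with hbb
    have hbb0 : bb 0 = a := rfl
    have hbb1 : bb 1 = b := rfl
    have hbb2 : bb 2 = br a b := rfl
    have hbb3 : bb 3 = q := rfl
    have li4 : LinearIndependent k bb := by
      rw [Fintype.linearIndependent_iff]
      intro g hg
      rw [Fin.sum_univ_four, hbb0, hbb1, hbb2, hbb3] at hg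
      have brsum : ∀ z, br (g 0 • a + g 1 • b + g 2 • br a b + g 3 • q) z
          = g 0 • br a z + g 1 • br b z + g 2 • br (br a b) z + g 3 • br q z := by
        intro z
        show brBil h _ z = _
        simp [map_add, map_smul]
      have hg0 : g 0 = 0 := by
        have e := brsum b
        rw [hg, br_zero_left h, br_self h, hpb, hqb] at e
        simp only [smul_zero, add_zero, zero_add] at e
        rcases smul_eq_zero.1 e.symm with h' | h'
        · exact h'
        · exact absurd h' hab
      have hg1 : g 1 = 0 := by
        have e := brsum a
        rw [hg, br_zero_left h, br_self h, hba, hpa, hqa] at e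
        simp only [smul_zero, add_zero, zero_add, smul_neg] at e
        have e' : g 1 • br a b = 0 := by
          linear_combination (norm := module) e
        rcases smul_eq_zero.1 e' with h' | h'
        · exact h'
        · exact absurd h' hab
      rw [hg0, hg1, zero_smul, zero_smul, zero_add, zero_add] at hg
      have hg3 : g 3 = 0 := by
        by_contra hne
        apply hqp
        have e := congrArg (fun z => (g 3)⁻¹ • z) hg
        simp only [smul_add, smul_smul, inv_mul_cancel₀ hne, one_smul, smul_zero] at e
        have hq : q = (-((g 3)⁻¹ * g 2)) • br a b := by
          linear_combination (norm := module) e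
        rw [hq]
        exact smul_mem _ _ (mem_span_singleton_self _)
      rw [hg3, zero_smul, add_zero] at hg
      have hg2 : g 2 = 0 := by
        rcases smul_eq_zero.1 hg with h' | h'
        · exact h'
        · exact absurd h' hab
      intro i; fin_cases i <;> assumption
    have hDle : lcs br 1 ≤ span k {br a b} := by
      refine span_le.2 ?_
      rintro w ⟨x, y, -, rfl⟩
      refine SetLike.mem_coe.2 (br_all_mem_span h bb li4 _ ?_ x y)
      intro i j
      fin_cases i <;> fin_cases j <;>
        simp [hbb0, hbb1, hbb2, hbb3, br_self h, hza, hzq, hpa, hpb, hqa, hqb, hba,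
          mem_span_singleton_self, Submodule.neg_mem_iff]
    have := Submodule.finrank_mono hDle
    rw [hd2] at this
    have := fr_span_singleton_le (br a b)
    omega
  -- now the structure of the series: dim lcs2 = 1, lcs3 = 0
  have hd2' : finrank k (lcs br 2) = 1 := by
    have hlt := Submodule.finrank_lt_finrank_of_lt hlt2
    have hpos : finrank k (lcs br 2) ≠ 0 := fun hz => hb2 (Submodule.finrank_eq_zero.1 hz)
    rw [hd2] at hlt
    omega
  obtain ⟨e4, he4m, he4⟩ := Submodule.exists_mem_ne_zero_of_ne_bot hb2
  have hspan2 : lcs br 2 = span k {e4} := by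
    symm
    apply Submodule.eq_of_le_of_finrank_eq ((span_singleton_le_iff_mem e4 _).2 he4m)
    rw [finrank_span_singleton he4, hd2']
  have hlt3 : lcs br 3 < lcs br 2 := lcs_strict hn hb2
  have h3bot : lcs br 3 = ⊥ := by
    have := Submodule.finrank_lt_finrank_of_lt hlt3
    rw [hd2'] at this
    exact Submodule.finrank_eq_zero.1 (by omega)
  have hz2 : ∀ x y, y ∈ lcs br 2 → br x y = 0 := by
    intro x y hy
    have := br_mem_lcs hy x
    rwa [h3bot, mem_bot] at this
  have hze4 : ∀ x, br x e4 = 0 := fun x => hz2 x e4 he4m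
  obtain ⟨a, b, hab⟩ : ∃ a b, br a b ∉ span k {e4} := by
    by_contra hcon; push_neg at hcon
    have hle : lcs br 1 ≤ span k {e4} := by
      refine span_le.2 ?_
      rintro w ⟨x, y, -, rfl⟩
      exact hcon x y
    have := Submodule.finrank_mono hle
    rw [hd2, finrank_span_singleton he4] at this
    omega
  have he3D : br a b ∈ lcs br 1 := br_mem_lcs_one a b
  have he30 : br a b ≠ 0 := fun e => hab (e ▸ zero_mem _)
  -- the two structure constants
  obtain ⟨α, hα⟩ : ∃ α : k, br a (br a b) = α • e4 := by
    have hm := br_mem_lcs he3D a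
    rw [hspan2, mem_span_singleton] at hm
    obtain ⟨t, ht⟩ := hm
    exact ⟨t, ht.symm⟩
  obtain ⟨β, hβ⟩ : ∃ β : k, br b (br a b) = β • e4 := by
    have hm := br_mem_lcs he3D b
    rw [hspan2, mem_span_singleton] at hm
    obtain ⟨t, ht⟩ := hm
    exact ⟨t, ht.symm⟩
  have hba : br b a = -(br a b) := br_antisymm h a b
  have hz34 : br (br a b) e4 = 0 := hze4 _
  have h43 : br e4 (br a b) = 0 := by
    rw [br_antisymm h (br a b) e4, hz34, neg_zero]
  have h4a : br e4 a = 0 := by rw [br_antisymm h a e4, hze4, neg_zero]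
  have h4b : br e4 b = 0 := by rw [br_antisymm h b e4, hze4, neg_zero]
  have h3a : br (br a b) a = -(α • e4) := by rw [br_antisymm h a (br a b), hα]
  have h3b : br (br a b) b = -(β • e4) := by rw [br_antisymm h b (br a b), hβ]
  -- lcs 1 = span {[a,b], e4}
  have hli2 : LinearIndependent k ![br a b, e4] := by
    rw [LinearIndependent.pair_iff]
    intro s t hst
    have hs : s = 0 := by
      by_contra hne
      apply hab
      have e2 := congrArg (fun z => s⁻¹ • z) hst
      simp only [smul_add, smul_smul, inv_mul_cancel₀ hne, one_smul, smul_zero] at e2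
      have hq : br a b = (-(s⁻¹ * t)) • e4 := by
        linear_combination (norm := module) e2
      rw [hq]
      exact smul_mem _ _ (mem_span_singleton_self _)
    rw [hs, zero_smul, zero_add] at hst
    rcases smul_eq_zero.1 hst with h' | h'
    · exact ⟨hs, h'⟩
    · exact absurd h' he4
  have hspan1 : lcs br 1 = span k {br a b, e4} := by
    symm
    apply Submodule.eq_of_le_of_finrank_eq
    · refine span_le.2 ?_
      rintro z hz
      rcases Set.mem_insert_iff.1 hz with rfl | hz'
      · exact he3D
      · rw [Set.mem_singleton_iff] at hz'
        subst hz'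
        exact lcs_succ_le br 1 he4m
    · rw [hd2]
      have hcard := finrank_span_eq_card hli2
      rw [show Set.range ![br a b, e4] = {br a b, e4} from by
        ext z; simp [Matrix.range_cons, Matrix.range_empty]; tauto] at hcard
      rw [hcard, Fintype.card_fin]
  -- independence of a, b, [a,b], e4
  set bb : Fin 4 → (Fin 4 → k) := ![a, b, br a b, e4] with hbb
  have hbb0 : bb 0 = a := rfl
  have hbb1 : bb 1 = b := rfl
  have hbb2 : bb 2 = br a b := rfl
  have hbb3 : bb 3 = e4 := rfl
  have li4 : LinearIndependent k bb := by
    rw [Fintype.linearIndependent_iff]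
    intro g hg
    rw [Fin.sum_univ_four, hbb0, hbb1, hbb2, hbb3] at hg
    have brsum : ∀ z, br (g 0 • a + g 1 • b + g 2 • br a b + g 3 • e4) z
        = g 0 • br a z + g 1 • br b z + g 2 • br (br a b) z + g 3 • br e4 z := by
      intro z
      show brBil h _ z = _
      simp [map_add, map_smul]
    have hg0 : g 0 = 0 := by
      by_contra hne
      apply hab
      have e := brsum b
      rw [hg, br_zero_left h, br_self h, h3b, h4b] at e
      simp only [smul_zero, add_zero, zero_add, smul_neg, smul_smul] at e
      -- e : 0 = g 0 • br a b + -((g 2 * β) • e4)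
      have hq : br a b = ((g 0)⁻¹ * (g 2 * β)) • e4 := by
        have e2 := congrArg (fun z => (g 0)⁻¹ • z) e
        simp only [smul_add, smul_smul, smul_zero, smul_neg] at e2
        rw [inv_mul_cancel₀ hne, one_smul] at e2
        linear_combination (norm := module) -e2
      rw [hq]
      exact smul_mem _ _ (mem_span_singleton_self _)
    have hg1 : g 1 = 0 := by
      by_contra hne
      apply hab
      have e := brsum a
      rw [hg, br_zero_left h, br_self h, hba, h3a, h4a] at e
      simp only [smul_zero, add_zero, zero_add, smul_neg, smul_smul] at e
      -- e : 0 = -(g 1 • br a b) + -((g 2 * α) • e4)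
      have hq : br a b = (-((g 1)⁻¹ * (g 2 * α))) • e4 := by
        have e2 := congrArg (fun z => (g 1)⁻¹ • z) e
        simp only [smul_add, smul_smul, smul_zero, smul_neg] at e2
        rw [inv_mul_cancel₀ hne, one_smul] at e2
        linear_combination (norm := module) e2
      rw [hq]
      exact smul_mem _ _ (mem_span_singleton_self _)
    rw [hg0, hg1, zero_smul, zero_smul, zero_add, zero_add] at hg
    have hg2 : g 2 = 0 := by
      by_contra hne
      apply hab
      have e2 := congrArg (fun z => (g 2)⁻¹ • z) hg
      simp only [smul_add, smul_smul, inv_mul_cancel₀ hne, one_smul, smul_zero] at e2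
      have hq : br a b = (-((g 2)⁻¹ * g 3)) • e4 := by
        linear_combination (norm := module) e2
      rw [hq]
      exact smul_mem _ _ (mem_span_singleton_self _)
    rw [hg2, zero_smul, zero_add] at hg
    have hg3 : g 3 = 0 := by
      rcases smul_eq_zero.1 hg with h' | h'
      · exact h'
      · exact absurd h' he4
    intro i; fin_cases i <;> assumption
  -- α = 0 and β = 0 is impossible
  have himp : α = 0 → β = 0 → False := by
    intro hA hB
    apply hb2
    apply le_bot_iff.1
    refine span_le.2 ?_
    rintro w ⟨x, y, hy, rfl⟩
    rw [SetLike.mem_coe, mem_bot]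
    have hbx3 : ∀ x', br x' (br a b) = 0 := by
      intro x'
      refine br_left_eq_zero h bb li4 (br a b) ?_ x'
      intro i
      fin_cases i <;>
        simp [hbb0, hbb1, hbb2, hbb3, br_self h, hα, hβ, hA, hB, h43]
    rw [hspan1] at hy
    obtain ⟨s, t, hy'⟩ := mem_span_pair.1 hy
    rw [← hy']
    have hexp : br x (s • br a b + t • e4) = s • br x (br a b) + t • br x e4 := by
      show brBil h x _ = _
      simp [map_add, map_smul]
    rw [hexp, hbx3, hze4, smul_zero, smul_zero, add_zero]
  -- final construction
  by_cases hA : α = 0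
  · -- then β ≠ 0; basis (b, -a, [a,b], β • e4)
    have hB : β ≠ 0 := fun hB => himp hA hB
    have h01 : br b (-a) = br a b := by
      have : br b (-a) = -br b a := by
        show brBil h b (-a) = -brBil h b a
        rw [map_neg]
      rw [this, hba, neg_neg]
    have h03 : br b (β • e4) = 0 := by
      have : br b (β • e4) = β • br b e4 := by
        show brBil h b _ = _
        rw [map_smul]
        rfl
      rw [this, hze4, smul_zero]
    have h12 : br (-a) (br a b) = 0 := by
      have : br (-a) (br a b) = -br a (br a b) := by
        show brBil h _ _ = _
        rw [map_neg, LinearMap.neg_apply]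
        rfl
      rw [this, hα, hA, zero_smul, neg_zero]
    have h13 : br (-a) (β • e4) = 0 := by
      have : br (-a) (β • e4) = β • -(br a e4) := by
        show brBil h _ _ = _
        simp only [map_neg, map_smul, LinearMap.neg_apply, LinearMap.smul_apply]
        rfl
      rw [this, hze4, neg_zero, smul_zero]
    have h23 : br (br a b) (β • e4) = 0 := by
      have : br (br a b) (β • e4) = β • br (br a b) e4 := by
        show brBil h _ _ = _
        rw [map_smul]
        rfl
      rw [this, hz34, smul_zero]
    have hb4 : β • e4 ≠ 0 := smul_ne_zero hB he4
    have hb34 : br a b ∉ span k {β • e4} := by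
      rw [span_singleton_smul_eq (IsUnit.mk0 β hB)]
      exact hab
    exact iso_fil_of_table h ![b, -a, br a b, β • e4] h01 hβ h03 h12 h13 h23 hb4 hb34
  · -- α ≠ 0; basis (a, b - (β/α) a, [a,b], α • e4)
    have h01 : br a (b + (-(β * α⁻¹)) • a) = br a b := by
      have : br a (b + (-(β * α⁻¹)) • a) = br a b + (-(β * α⁻¹)) • br a a := by
        show brBil h _ _ = _
        rw [map_add, map_smul]
        rfl
      rw [this, br_self h, smul_zero, add_zero]
    have h03 : br a (α • e4) = 0 := by
      have : br a (α • e4) = α • br a e4 := by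
        show brBil h _ _ = _
        rw [map_smul]
        rfl
      rw [this, hze4, smul_zero]
    have h12 : br (b + (-(β * α⁻¹)) • a) (br a b) = 0 := by
      have hx : br (b + (-(β * α⁻¹)) • a) (br a b)
          = br b (br a b) + (-(β * α⁻¹)) • br a (br a b) := by
        show brBil h _ _ = _
        rw [map_add, LinearMap.add_apply, map_smul, LinearMap.smul_apply]
        rfl
      rw [hx, hα, hβ, smul_smul]
      rw [show -(β * α⁻¹) * α = -β from by field_simp]
      module
    have h13 : br (b + (-(β * α⁻¹)) • a) (α • e4) = 0 := by
      have hx : br (b + (-(β * α⁻¹)) • a) (α • e4)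
          = α • (br b e4 + (-(β * α⁻¹)) • br a e4) := by
        show brBil h _ _ = _
        simp only [map_add, map_smul, LinearMap.add_apply, LinearMap.smul_apply]
        rfl
      rw [hx, hze4, hze4, smul_zero, add_zero, smul_zero]
    have h23 : br (br a b) (α • e4) = 0 := by
      have : br (br a b) (α • e4) = α • br (br a b) e4 := by
        show brBil h _ _ = _
        rw [map_smul]
        rfl
      rw [this, hz34, smul_zero]
    have hb4 : α • e4 ≠ 0 := smul_ne_zero hA he4
    have hb34 : br a b ∉ span k {α • e4} := by
      rw [span_singleton_smul_eq (IsUnit.mk0 α hA)]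
      exact hab
    exact iso_fil_of_table h ![a, b + (-(β * α⁻¹)) • a, br a b, α • e4]
      h01 hα h03 h12 h13 h23 hb4 hb34


lemma classify (h : IsLieBracket k br) (hn : IsNilpotentBracket br) :
    BracketIso br (abelianBr4 k) ∨ BracketIso br (heisSumBr k) ∨
      BracketIso br (filiformBr4 k) := by
  have hfr : finrank k (Fin 4 → k) = 4 := Module.finrank_fin_fun k
  by_cases habel : lcs br 1 = ⊥
  · left
    refine ⟨LinearEquiv.refl k _, fun x y => ?_⟩
    have hm : br x y ∈ lcs br 1 := br_mem_lcs_one x y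
    rw [habel, mem_bot] at hm
    simpa [abelianBr4] using hm
  have htb : (⊤ : Submodule k (Fin 4 → k)) ≠ ⊥ := by
    intro hb
    have h1 : (Pi.single 0 1 : Fin 4 → k) ∈ (⊥ : Submodule k (Fin 4 → k)) := hb ▸ mem_top
    rw [mem_bot] at h1
    simpa using congrFun h1 0
  have hlt1 : lcs br 1 < ⊤ := lcs_strict hn (m := 0) htb
  have hd1lt : finrank k (lcs br 1) < 4 := by
    have := Submodule.finrank_lt_finrank_of_lt (show lcs br 1 < ⊤ from hlt1)
    rwa [finrank_top, hfr] at this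
  have hd1pos : finrank k (lcs br 1) ≠ 0 := fun hz => habel (Submodule.finrank_eq_zero.1 hz)
  have hlt2 : lcs br 2 < lcs br 1 := lcs_strict hn habel
  -- rule out dimension 3
  have hd1ne3 : finrank k (lcs br 1) ≠ 3 := by
    intro hd3
    have hDt : lcs br 1 ≠ ⊤ := hlt1.ne
    obtain ⟨x, -, hx⟩ := SetLike.exists_of_lt hlt1
    have hT : span k {x} ⊔ lcs br 1 = ⊤ := by
      apply Submodule.eq_top_of_finrank_eq
      have hle : lcs br 1 < span k {x} ⊔ lcs br 1 := by
        refine lt_of_le_of_ne le_sup_right fun e => hx ?_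
        rw [e]
        exact mem_sup_left (mem_span_singleton_self x)
      have h4 := Submodule.finrank_lt_finrank_of_lt hle
      have h4' := Submodule.finrank_le (span k {x} ⊔ lcs br 1)
      rw [hfr]
      omega
    have hsub : lcs br 1 ≤ lcs br 2 := by
      refine span_le.2 ?_
      rintro w ⟨u, v, -, rfl⟩
      have hu : u ∈ span k {x} ⊔ lcs br 1 := hT.symm ▸ mem_top
      have hv : v ∈ span k {x} ⊔ lcs br 1 := hT.symm ▸ mem_top
      rw [mem_sup] at hu hv
      obtain ⟨yu, hyu, du, hdu, rfl⟩ := hu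
      obtain ⟨yv, hyv, dv, hdv, rfl⟩ := hv
      rw [mem_span_singleton] at hyu hyv
      obtain ⟨a, rfl⟩ := hyu
      obtain ⟨b, rfl⟩ := hyv
      have expand : br (a • x + du) (b • x + dv)
          = b • (a • br x x + br du x) + (a • br x dv + br du dv) := by
        show brBil h _ _ = _
        simp only [map_add, map_smul, LinearMap.add_apply, LinearMap.smul_apply]
        rfl
      rw [SetLike.mem_coe, expand, br_self h, smul_zero, zero_add]
      refine add_mem (smul_mem _ _ ?_) (add_mem (smul_mem _ _ (br_mem_lcs hdv x))
        (br_mem_lcs hdv du))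
      rw [br_antisymm h x du]
      exact neg_mem (br_mem_lcs hdu x)
    exact absurd hsub hlt2.not_ge
  have : finrank k (lcs br 1) = 1 ∨ finrank k (lcs br 1) = 2 := by omega
  rcases this with hd | hd
  · exact Or.inr (Or.inl (classify_dim1 h hn habel hlt2 hd))
  · exact Or.inr (Or.inr (classify_dim2 h hn habel hlt2 hd))
end
end Nilp4

/-- Over any field `k` with `char k ≠ 2` there are exactly 3
isomorphism classes of 4-dimensional nilpotent Lie algebras: the abelian algebra `A₄`,
`L₃ ⊕ A₁` (Heisenberg plus abelian), and the filiform algebra `L₄`. -/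
theorem nilpotent_lie_dim4_classification (k : Type) [Field k] (hk : (2 : k) ≠ 0) :
    (IsLieBracket k (abelianBr4 k) ∧ IsNilpotentBracket (abelianBr4 k)) ∧
    (IsLieBracket k (heisSumBr k) ∧ IsNilpotentBracket (heisSumBr k)) ∧
    (IsLieBracket k (filiformBr4 k) ∧ IsNilpotentBracket (filiformBr4 k)) ∧
    ¬ BracketIso (abelianBr4 k) (heisSumBr k) ∧
    ¬ BracketIso (abelianBr4 k) (filiformBr4 k) ∧
    ¬ BracketIso (heisSumBr k) (filiformBr4 k) ∧
    (∀ br : (Fin 4 → k) → (Fin 4 → k) → (Fin 4 → k),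
      IsLieBracket k br → IsNilpotentBracket br →
        BracketIso br (abelianBr4 k) ∨ BracketIso br (heisSumBr k) ∨
          BracketIso br (filiformBr4 k)) :=
  ⟨⟨Nilp4.isLie_abelian k, Nilp4.isNilpotent_abelian k⟩,
   ⟨Nilp4.isLie_heis k, Nilp4.isNilpotent_heis k⟩,
   ⟨Nilp4.isLie_fil k, Nilp4.isNilpotent_fil k⟩,
   Nilp4.not_iso_abelian_heis,
   Nilp4.not_iso_abelian_fil,
   Nilp4.not_iso_heis_fil,
   fun _ h hn => Nilp4.classify h hn⟩
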